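/- For probability measures P and Q with densities p₀, q₀ having common support, the Kullback–Leibler divergence admits the variational representation D_K(P,Q) = sup over measurable g > 0 of ∫ log g dP − ∫ g dQ + 1, with the supremum attained at g₀ = p₀/q₀. -/

import Mathlib

/-!
Pointwise, `log t ≤ t - 1` at `t = g q / p` gives `p log g - p log (p / q) ≤ q g - p`.
Integrating against `μ` turns the left side into `∫ log g dP - D_K(P, Q)` and the right side into
`∫ g dQ - 1`. At `g = p / q` the inequality is an equality, since `∫ (p / q) dQ = ∫ p dμ = 1`.
-/

open MeasureTheory Real ENNReal

section WithDensityOfReal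

variable {X : Type*} [MeasurableSpace X] {μ : Measure X} {r : X → ℝ}

lemma integral_withDensity_ofReal (hr : AEMeasurable r μ) (hr0 : 0 ≤ᵐ[μ] r) (f : X → ℝ) :
    ∫ x, f x ∂μ.withDensity (fun x => ENNReal.ofReal (r x)) = ∫ x, r x * f x ∂μ := by
  rw [integral_withDensity_eq_integral_toReal_smul₀ hr.ennreal_ofReal
    (ae_of_all _ fun _ => ofReal_lt_top)]
  exact integral_congr_ae (hr0.mono fun x hx => by simp [toReal_ofReal hx])

lemma integrable_withDensity_ofReal_iff (hr : AEMeasurable r μ) (hr0 : 0 ≤ᵐ[μ] r)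
    {f : X → ℝ} :
    Integrable f (μ.withDensity fun x => ENNReal.ofReal (r x)) ↔
      Integrable (fun x => r x * f x) μ := by
  rw [integrable_withDensity_iff_integrable_smul₀' hr.ennreal_ofReal
    (ae_of_all _ fun _ => ofReal_lt_top)]
  exact integrable_congr (hr0.mono fun x hx => by simp [toReal_ofReal hx])

lemma integrable_of_isFiniteMeasure_withDensity_ofReal (hr : AEMeasurable r μ)
    (hr0 : 0 ≤ᵐ[μ] r) [IsFiniteMeasure (μ.withDensity fun x => ENNReal.ofReal (r x))] :
    Integrable r μ := by
  simpa using (integrable_withDensity_ofReal_iff hr hr0).1 (integrable_const (1 : ℝ))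

lemma integral_eq_one_of_isProbabilityMeasure_withDensity_ofReal (hr : AEMeasurable r μ)
    (hr0 : 0 ≤ᵐ[μ] r) [IsProbabilityMeasure (μ.withDensity fun x => ENNReal.ofReal (r x))] :
    ∫ x, r x ∂μ = 1 := by
  simpa using (integral_withDensity_ofReal hr hr0 fun _ => (1 : ℝ)).symm

end WithDensityOfReal

lemma Real.mul_log_sub_mul_log_div_le {a b c : ℝ} (ha : 0 < a) (hb : 0 < b) (hc : 0 < c) :
    a * log c - a * log (a / b) ≤ b * c - a := by
  have hlog : log c - log (a / b) = log (b * c / a) := by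
    rw [← log_div hc.ne' (div_pos ha hb).ne']
    congr 1
    field_simp
  have hle : log (b * c / a) ≤ b * c / a - 1 := log_le_sub_one_of_pos (by positivity)
  calc a * log c - a * log (a / b) = a * log (b * c / a) := by rw [← mul_sub, hlog]
    _ ≤ a * (b * c / a - 1) := mul_le_mul_of_nonneg_left hle ha.le
    _ = b * c - a := by field_simp

theorem kl_variational_representation_general
    {X : Type*} [MeasurableSpace X] (μ : Measure X)
    (P Q : Measure X) [IsProbabilityMeasure P]
    (p q : X → ℝ) (hpmeas : Measurable p) (hqmeas : Measurable q)
    (hpq : ∀ᵐ x ∂μ, 0 < p x ∧ 0 < q x)  -- common support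
    (hP : P = μ.withDensity (fun x => ENNReal.ofReal (p x)))
    (hQ : Q = μ.withDensity (fun x => ENNReal.ofReal (q x)))
    (hD : Integrable (fun x => Real.log (p x / q x)) P) :
    -- every positive measurable g gives a lower bound on D_K(P,Q) …
    (∀ g : X → ℝ, Measurable g → (∀ x, 0 < g x) →
      Integrable (fun x => Real.log (g x)) P → Integrable g Q →
      ∫ x, Real.log (g x) ∂P - ∫ x, g x ∂Q + 1 ≤ ∫ x, Real.log (p x / q x) ∂P) ∧
    -- … and the supremum is attained at g₀ = p₀/q₀
    (∫ x, Real.log (p x / q x) ∂P - ∫ x, p x / q x ∂Q + 1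
      = ∫ x, Real.log (p x / q x) ∂P) := by
  subst hP hQ
  have hp := hpmeas.aemeasurable (μ := μ)
  have hq := hqmeas.aemeasurable (μ := μ)
  have hp0 : 0 ≤ᵐ[μ] p := hpq.mono fun _ h => h.1.le
  have hq0 : 0 ≤ᵐ[μ] q := hpq.mono fun _ h => h.2.le
  have hp_one := integral_eq_one_of_isProbabilityMeasure_withDensity_ofReal hp hp0
  simp only [integral_withDensity_ofReal hp hp0, integral_withDensity_ofReal hq hq0]
  refine ⟨fun g _ hgpos hlogg hgQ => ?_, ?_⟩
  · rw [integrable_withDensity_ofReal_iff hp hp0] at hlogg hD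
    rw [integrable_withDensity_ofReal_iff hq hq0] at hgQ
    have hp_int := integrable_of_isFiniteMeasure_withDensity_ofReal hp hp0
    have hmono : ∫ x, (p x * log (g x) - p x * log (p x / q x)) ∂μ ≤ ∫ x, (q x * g x - p x) ∂μ :=
      integral_mono_ae (hlogg.sub hD) (hgQ.sub hp_int)
        (hpq.mono fun x h => mul_log_sub_mul_log_div_le h.1 h.2 (hgpos x))
    rw [integral_sub hlogg hD, integral_sub hgQ hp_int, hp_one] at hmono
    linarith
  · have hq_ratio : ∫ x, q x * (p x / q x) ∂μ = 1 := by
      rw [← hp_one]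
      exact integral_congr_ae (hpq.mono fun x h => mul_div_cancel₀ _ h.2.ne')
    rw [hq_ratio]
    ring

/-- Variational representation of the KL divergence:
`D_K(P,Q) = sup_{g > 0} (∫ log g dP − ∫ g dQ + 1)`, with the supremum
attained at `g₀ = p₀/q₀`. -/
theorem kl_variational_representation
    {X : Type*} [MeasurableSpace X] (μ : Measure X) [SigmaFinite μ]
    (P Q : Measure X) [IsProbabilityMeasure P] [IsProbabilityMeasure Q]
    (p q : X → ℝ) (hpmeas : Measurable p) (hqmeas : Measurable q)
    (hpq : ∀ᵐ x ∂μ, 0 < p x ∧ 0 < q x)  -- common support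
    (hP : P = μ.withDensity (fun x => ENNReal.ofReal (p x)))
    (hQ : Q = μ.withDensity (fun x => ENNReal.ofReal (q x)))
    (hD : Integrable (fun x => Real.log (p x / q x)) P)
    (hg0Q : Integrable (fun x => p x / q x) Q) :
    -- every positive measurable g gives a lower bound on D_K(P,Q) …
    (∀ g : X → ℝ, Measurable g → (∀ x, 0 < g x) →
      Integrable (fun x => Real.log (g x)) P → Integrable g Q →
      ∫ x, Real.log (g x) ∂P - ∫ x, g x ∂Q + 1 ≤ ∫ x, Real.log (p x / q x) ∂P) ∧
    -- … and the supremum is attained at g₀ = p₀/q₀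
    (∫ x, Real.log (p x / q x) ∂P - ∫ x, p x / q x ∂Q + 1
      = ∫ x, Real.log (p x / q x) ∂P) :=
  kl_variational_representation_general μ P Q p q hpmeas hqmeas hpq hP hQ hD
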